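/- arXiv:2006.05412 — 8 statements merged into one kernel-verified Lean document; each statement's English description precedes it below -/
import Mathlib

section
/- For every r ∈ ℕ and every q ≥ 2, there exist n₀ ∈ ℕ and ε > 0 such that for all n ≥ n₀, every coloring of {1,...,n} with r+1 colors contains at least (r+1)·ε·n² monochromatic arithmetic progressions of length q. -/
open Finset Combinatorics

/-- Finite Van der Waerden theorem, derived from the Hales–Jewett theorem. -/
lemma vdW_finite (r q : ℕ) (hq : 2 ≤ q) :
    ∃ W : ℕ, 2 ≤ W ∧ ∀ C : ℕ → Fin (r + 1), ∃ b d : ℕ,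
      1 ≤ d ∧ b + (q - 1) * d ≤ W - 1 ∧ ∀ i < q, C (b + i * d) = C b := by
  obtain ⟨ι, ιfin, hι⟩ := Line.exists_mono_in_high_dimension (Fin q) (Fin (r + 1))
  refine ⟨(q - 1) * Fintype.card ι + 2, by omega, ?_⟩
  intro C
  obtain ⟨l, k, hl⟩ := hι fun v => C (∑ i, (v i : ℕ))
  classical
  set s : Finset ι := Finset.univ.filter (fun i => l.idxFun i = none) with hs
  have hd : 1 ≤ s.card := Finset.card_pos.mpr
    ⟨l.proper.choose, by simp [hs, l.proper.choose_spec]⟩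
  set b : ℕ := ∑ i ∈ sᶜ, ((l.idxFun i).map Fin.val).getD 0 with hb
  have key : ∀ x : Fin q, ∑ i, ((l x i : Fin q) : ℕ) = b + (x : ℕ) * s.card := by
    intro x
    rw [← Finset.sum_add_sum_compl s]
    have h1 : ∑ i ∈ s, ((l x i : Fin q) : ℕ) = (x : ℕ) * s.card := by
      rw [Finset.sum_congr rfl (fun i hi => ?_), Finset.sum_const, smul_eq_mul, mul_comm]
      rw [hs, Finset.mem_filter] at hi
      rw [l.apply_none _ _ hi.2]
    have h2 : ∑ i ∈ sᶜ, ((l x i : Fin q) : ℕ) = b := by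
      rw [hb]
      refine Finset.sum_congr rfl (fun i hi => ?_)
      rw [Finset.mem_compl, hs, Finset.mem_filter] at hi
      cases h : l.idxFun i with
      | none => exact absurd ⟨Finset.mem_univ _, h⟩ hi
      | some a => simp [l.apply_some h, h]
    rw [h1, h2]; ring
  refine ⟨b, s.card, hd, ?_, ?_⟩
  · have hble : b ≤ (q - 1) * sᶜ.card := by
      rw [hb, mul_comm]
      refine le_trans (Finset.sum_le_card_nsmul _ _ (q - 1) (fun i _ => ?_)) (by simp)
      cases h : l.idxFun i with
      | none => simp
      | some a => simpa [h] using Nat.le_pred_of_lt a.isLt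
    have : sᶜ.card + s.card = Fintype.card ι := by
      rw [add_comm]; exact Finset.card_add_card_compl s
    have : b + (q - 1) * s.card ≤ (q - 1) * Fintype.card ι := by
      calc b + (q - 1) * s.card ≤ (q - 1) * sᶜ.card + (q - 1) * s.card := by omega
        _ = (q - 1) * (sᶜ.card + s.card) := by ring
        _ = (q - 1) * Fintype.card ι := by rw [this]
    omega
  · intro i hi
    have h1 := hl ⟨i, hi⟩
    have h0 := hl ⟨0, Nat.lt_of_lt_of_le Nat.zero_lt_two hq⟩
    simp only at h1 h0
    rw [key] at h1 h0
    simp only [Fin.val_mk, Nat.zero_mul, Nat.add_zero] at h1 h0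
    rw [h1, h0]

/-- Varnavides-type supersaturation: for every `r` and `q ≥ 2` there are `n₀` and `ε > 0`
such that for all `n ≥ n₀`, every `(r+1)`-coloring of `{1,…,n}` yields at least
`(r+1)·ε·n²` monochromatic `q`-term arithmetic progressions. -/
theorem AP_supersaturation (r q : ℕ) (hq : 2 ≤ q) :
    ∃ (n₀ : ℕ) (ε : ℝ), 0 < ε ∧ ∀ n ≥ n₀, ∀ c : ℕ → Fin (r + 1),
      ((r : ℝ) + 1) * ε * (n : ℝ) ^ 2 ≤
        (((Finset.Icc 1 n) ×ˢ (Finset.Icc 1 n)).filter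
          (fun p => p.1 + (q - 1) * p.2 ≤ n ∧
            ∀ i < q, c (p.1 + i * p.2) = c p.1)).card := by
  classical
  obtain ⟨W, hW2, hvdw⟩ := vdW_finite r q hq
  refine ⟨2 * W, (((r : ℝ) + 1) * (4 * (W : ℝ) ^ 4))⁻¹, by positivity, ?_⟩
  intro n hn c
  set m := n / W with hm
  have hm1 : 1 ≤ m := by
    rw [hm]; exact Nat.one_le_div_iff (by omega) |>.mpr (by omega)
  have hWm : W * m ≤ n := by
    rw [hm, mul_comm]; exact Nat.div_mul_le_self n W
  -- choice of a monochromatic AP in each grid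
  have hC : ∀ s t : ℕ, ∃ p : ℕ × ℕ, 1 ≤ p.2 ∧ p.1 + (q - 1) * p.2 ≤ W - 1 ∧
      ∀ i < q, c (s + (p.1 + i * p.2) * t) = c (s + p.1 * t) := by
    intro s t
    obtain ⟨b, d, hd, hbd, hmono⟩ := hvdw (fun i => c (s + i * t))
    exact ⟨(b, d), hd, hbd, fun i hi => hmono i hi⟩
  choose g hg1 hg2 hg3 using hC
  set f : ℕ × ℕ → ℕ × ℕ :=
    fun p => (p.1 + (g p.1 p.2).1 * p.2, (g p.1 p.2).2 * p.2) with hf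
  set G : Finset (ℕ × ℕ) := Finset.Icc 1 m ×ˢ Finset.Icc 1 m with hG
  set T : Finset (ℕ × ℕ) := ((Finset.Icc 1 n) ×ˢ (Finset.Icc 1 n)).filter
      (fun p => p.1 + (q - 1) * p.2 ≤ n ∧
        ∀ i < q, c (p.1 + i * p.2) = c p.1) with hT
  -- every grid maps into T
  have hmaps : ∀ p ∈ G, f p ∈ T := by
    rintro ⟨s, t⟩ hp
    rw [hG, Finset.mem_product, Finset.mem_Icc, Finset.mem_Icc] at hp
    obtain ⟨⟨hs1, hs2⟩, ht1, ht2⟩ := hp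
    have hb := hg1 s t
    have hbd := hg2 s t
    have hmono := hg3 s t
    set b := (g s t).1
    set d' := (g s t).2
    have hd'W : d' ≤ W - 1 := by
      have h1 : 1 * d' ≤ (q - 1) * d' := Nat.mul_le_mul_right d' (by omega)
      omega
    have hbW : b ≤ W - 1 := by omega
    have hlast : (s + b * t) + (q - 1) * (d' * t) ≤ n := by
      have : (s + b * t) + (q - 1) * (d' * t) = s + (b + (q - 1) * d') * t := by ring
      rw [this]
      calc s + (b + (q - 1) * d') * t ≤ m + (W - 1) * m :=
            Nat.add_le_add hs2 (Nat.mul_le_mul (by omega) ht2)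
        _ ≤ W * m := by
            have : m + (W - 1) * m = (1 + (W - 1)) * m := by ring
            rw [this]
            exact Nat.mul_le_mul_right m (by omega)
        _ ≤ n := hWm
    have hfp : f (s, t) = (s + b * t, d' * t) := rfl
    rw [hfp, hT]
    simp only [Finset.mem_filter, Finset.mem_product, Finset.mem_Icc]
    have hdpos : 1 ≤ d' * t := Nat.one_le_iff_ne_zero.mpr (by positivity)
    refine ⟨⟨⟨by omega, ?_⟩, hdpos, ?_⟩, hlast, ?_⟩
    · -- s + b * t ≤ n
      omega
    · -- d' * t ≤ n
      have h1 : 1 * (d' * t) ≤ (q - 1) * (d' * t) := Nat.mul_le_mul_right _ (by omega)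
      omega
    · intro i hi
      have heq2 : s + b * t + i * (d' * t) = s + (b + i * d') * t := by ring
      rw [heq2]
      exact hmono i hi
  -- fibers of f over G have size at most W * W
  have hfiber : ∀ y ∈ T, (G.filter (fun p => f p = y)).card ≤ W * W := by
    rintro ⟨a, d⟩ _
    have hsub : G.filter (fun p => f p = (a, d)) ⊆
        (Finset.Icc 1 (W - 1) ×ˢ Finset.Icc 0 (W - 1)).image
          (fun bd : ℕ × ℕ => (a - bd.2 * (d / bd.1), d / bd.1)) := by
      rintro ⟨s, t⟩ hp
      rw [Finset.mem_filter] at hp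
      obtain ⟨hpG, hpf⟩ := hp
      have hb := hg1 s t
      have hbd := hg2 s t
      set b := (g s t).1
      set d' := (g s t).2
      have hd'W : d' ≤ W - 1 := by
        have h1 : 1 * d' ≤ (q - 1) * d' := Nat.mul_le_mul_right d' (by omega)
        omega
      have hbW : b ≤ W - 1 := by omega
      have hfp : f (s, t) = (s + b * t, d' * t) := rfl
      rw [hfp, Prod.mk.injEq] at hpf
      obtain ⟨ha, hd⟩ := hpf
      rw [Finset.mem_image]
      refine ⟨(d', b), ?_, ?_⟩
      · rw [Finset.mem_product, Finset.mem_Icc, Finset.mem_Icc]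
        exact ⟨⟨hb, hd'W⟩, by omega, hbW⟩
      · have ht : d / d' = t := by rw [← hd, Nat.mul_div_cancel_left t (by omega)]
        simp only [ht, Prod.mk.injEq]
        exact ⟨by omega, trivial⟩
    calc (G.filter (fun p => f p = (a, d))).card
        ≤ ((Finset.Icc 1 (W - 1) ×ˢ Finset.Icc 0 (W - 1)).image
            (fun bd : ℕ × ℕ => (a - bd.2 * (d / bd.1), d / bd.1))).card :=
          Finset.card_le_card hsub
      _ ≤ (Finset.Icc 1 (W - 1) ×ˢ Finset.Icc 0 (W - 1)).card := Finset.card_image_le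
      _ ≤ W * W := by
          rw [Finset.card_product, Nat.card_Icc, Nat.card_Icc]
          exact Nat.mul_le_mul (by omega) (by omega)
  have hcount : G.card ≤ W * W * T.card :=
    Finset.card_le_mul_card_image_of_maps_to hmaps (W * W) hfiber
  have hGcard : G.card = m * m := by
    rw [hG, Finset.card_product, Nat.card_Icc]; simp
  -- n ≤ 2 * W * m
  have hn2 : n ≤ 2 * (W * m) := by
    have h := Nat.div_add_mod n W
    rw [← hm] at h
    have hmod : n % W < W := Nat.mod_lt n (by omega)
    have hWle : W ≤ W * m := Nat.le_mul_of_pos_right W (by omega)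
    omega
  -- nat inequality n^2 ≤ 4 * W^4 * T.card
  have hnat : n ^ 2 ≤ 4 * W ^ 4 * T.card := by
    calc n ^ 2 ≤ (2 * (W * m)) ^ 2 := Nat.pow_le_pow_left hn2 2
      _ = 4 * W ^ 2 * (m * m) := by ring
      _ ≤ 4 * W ^ 2 * (W * W * T.card) := by
          rw [← hGcard]; exact Nat.mul_le_mul_left _ hcount
      _ = 4 * W ^ 4 * T.card := by ring
  have hreal : (n : ℝ) ^ 2 ≤ 4 * (W : ℝ) ^ 4 * T.card := by exact_mod_cast hnat
  have hrpos : ((r : ℝ) + 1) ≠ 0 := by positivity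
  have heq : ((r : ℝ) + 1) * (((r : ℝ) + 1) * (4 * (W : ℝ) ^ 4))⁻¹
      = (4 * (W : ℝ) ^ 4)⁻¹ := by
    rw [mul_inv, ← mul_assoc, mul_inv_cancel₀ hrpos, one_mul]
  rw [heq, inv_mul_le_iff₀ (by positivity)]
  exact hreal
end

section
/- Let x ≠ y be fixed integers and let q ≥ 3. The number of pairs (a,b) of integers such that some q-term arithmetic progression contains {x,a,b} and some q-term arithmetic progression contains {y,a,b} is bounded by a constant depending only on q (independent of x, y, and n). -/
/-- `u`, `v`, `w` all belong to a single `q`-term arithmetic progression with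
positive common difference. -/
def InQAP (q : ℕ) (u v w : ℤ) : Prop :=
  ∃ a₀ d : ℤ, 1 ≤ d ∧ (∃ i : ℕ, i < q ∧ u = a₀ + i * d) ∧
    (∃ i : ℕ, i < q ∧ v = a₀ + i * d) ∧ (∃ i : ℕ, i < q ∧ w = a₀ + i * d)

/-- From `InQAP q x a b` with `a ≠ b` we get integers `r, s` bounded by `q`, `s ≠ 0`,
with `s * (x - a) = r * (b - a)`. -/
lemma InQAP.coeffs {q : ℕ} {x a b : ℤ} (h : InQAP q x a b) (hab : a ≠ b) :
    ∃ r s : ℤ, -(q : ℤ) ≤ r ∧ r ≤ q ∧ -(q : ℤ) ≤ s ∧ s ≤ q ∧ s ≠ 0 ∧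
      s * (x - a) = r * (b - a) := by
  obtain ⟨a₀, d, hd, ⟨i, hi, hxi⟩, ⟨j, hj, haj⟩, ⟨k, hk, hbk⟩⟩ := h
  refine ⟨(i : ℤ) - j, (k : ℤ) - j, by omega, by omega, by omega, by omega, ?_, ?_⟩
  · intro h0
    apply hab
    have : (k : ℤ) = j := by omega
    rw [haj, hbk, this]
  · have hx : x - a = ((i : ℤ) - j) * d := by rw [hxi, haj]; ring
    have hb : b - a = ((k : ℤ) - j) * d := by rw [hbk, haj]; ring
    rw [hx, hb]; ring

/-- For `q ≥ 3` there is a constant `C` (depending only on `q`) such that for all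
distinct integers `x ≠ y`, the number of pairs `(a,b)` of distinct integers such that
some `q`-AP contains `{x,a,b}` and some `q`-AP contains `{y,a,b}` is at most `C`. -/
theorem single_edge_multicover (q : ℕ) (hq : 3 ≤ q) :
    ∃ C : ℕ, ∀ x y : ℤ, x ≠ y →
      Set.ncard {p : ℤ × ℤ | p.1 ≠ p.2 ∧ InQAP q x p.1 p.2 ∧ InQAP q y p.1 p.2} ≤ C := by
  classical
  refine ⟨((Finset.Icc (-(q : ℤ)) q).card) ^ 4, ?_⟩
  intro x y hxy
  set I : Finset ℤ := Finset.Icc (-(q : ℤ)) q with hI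
  set F : Finset (ℤ × ℤ × ℤ × ℤ) := I ×ˢ I ×ˢ I ×ˢ I with hF
  set g : ℤ × ℤ × ℤ × ℤ → ℤ × ℤ := fun t =>
    (x - t.1 * (t.2.1 * t.2.2.2 * (x - y) / (t.2.2.2 * t.1 - t.2.1 * t.2.2.1)) / t.2.1,
     x - t.1 * (t.2.1 * t.2.2.2 * (x - y) / (t.2.2.2 * t.1 - t.2.1 * t.2.2.1)) / t.2.1
       + t.2.1 * t.2.2.2 * (x - y) / (t.2.2.2 * t.1 - t.2.1 * t.2.2.1)) with hg
  have hsub : {p : ℤ × ℤ | p.1 ≠ p.2 ∧ InQAP q x p.1 p.2 ∧ InQAP q y p.1 p.2}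
      ⊆ ↑(F.image g) := by
    rintro ⟨a, b⟩ ⟨hab, hxab, hyab⟩
    obtain ⟨r, s, hr1, hr2, hs1, hs2, hs0, h1⟩ := hxab.coeffs hab
    obtain ⟨r', s', hr1', hr2', hs1', hs2', hs0', h2⟩ := hyab.coeffs hab
    have hkey : (s' * r - s * r') * (b - a) = s * s' * (x - y) := by
      linear_combination s * h2 - s' * h1
    have hne : s' * r - s * r' ≠ 0 := by
      intro h0
      rw [h0, zero_mul] at hkey
      exact hxy (sub_eq_zero.mp (by
        rcases mul_eq_zero.mp hkey.symm with h | h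
        · exact absurd (mul_eq_zero.mp h) (by tauto)
        · exact h))
    have he : s * s' * (x - y) / (s' * r - s * r') = b - a := by
      rw [← hkey]; exact Int.mul_ediv_cancel_left _ hne
    have ha : r * (b - a) / s = x - a := by
      rw [← h1]; exact Int.mul_ediv_cancel_left _ hs0
    simp only [Finset.coe_image, Set.mem_image, Finset.mem_coe]
    refine ⟨(r, s, r', s'), ?_, ?_⟩
    · simp only [hF, Finset.mem_product, hI, Finset.mem_Icc]
      exact ⟨⟨hr1, hr2⟩, ⟨hs1, hs2⟩, ⟨hr1', hr2'⟩, ⟨hs1', hs2'⟩⟩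
    · simp only [hg, he, ha]
      exact Prod.ext (by ring) (by ring)
  calc Set.ncard {p : ℤ × ℤ | p.1 ≠ p.2 ∧ InQAP q x p.1 p.2 ∧ InQAP q y p.1 p.2}
      ≤ Set.ncard (↑(F.image g) : Set (ℤ × ℤ)) :=
        Set.ncard_le_ncard hsub (F.image g).finite_toSet
    _ = (F.image g).card := Set.ncard_coe_finset _
    _ ≤ F.card := Finset.card_image_le
    _ = I.card ^ 4 := by
        simp [hF, Finset.card_product]; ring
end

section
/- Let q₁ > q₂ ≥ 3 and let E₁, E₂, E₃ be three arithmetic progressions of length q₁, all with the same common difference d, each intersecting a fixed set E in exactly one element, with the three intersection elements pairwise distinct. Then |E₁ ∪ E₂ ∪ E₃| ≥ 2q₁. -/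
private def memP (q : ℕ) (d a x : ℤ) : Prop :=
  d ∣ x - a ∧ a ≤ x ∧ x ≤ a + ((q : ℤ) - 1) * d

private lemma mem_ap_iff (q : ℕ) (hq : 1 ≤ q) (d : ℤ) (hd : 1 ≤ d) (a x : ℤ) :
    x ∈ (Finset.range q).image (fun i : ℕ => a + (i : ℤ) * d) ↔ memP q d a x := by
  constructor
  · intro hx
    simp only [Finset.mem_image, Finset.mem_range] at hx
    obtain ⟨i, hi, rfl⟩ := hx
    have h1 : (0 : ℤ) ≤ (i : ℤ) * d := mul_nonneg (by positivity) (by linarith)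
    have h2 : (i : ℤ) ≤ (q : ℤ) - 1 := by
      have : (i : ℤ) < (q : ℤ) := by exact_mod_cast hi
      linarith
    refine ⟨⟨i, by ring⟩, by linarith, ?_⟩
    have := mul_le_mul_of_nonneg_right h2 (by linarith : (0:ℤ) ≤ d)
    linarith
  · rintro ⟨⟨k, hk⟩, hlo, hhi⟩
    have hk0 : 0 ≤ k := by nlinarith
    have hkq : k ≤ (q : ℤ) - 1 := by nlinarith
    simp only [Finset.mem_image, Finset.mem_range]
    refine ⟨k.toNat, ?_, ?_⟩
    · omega
    · have : ((k.toNat : ℤ)) = k := Int.toNat_of_nonneg hk0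
      rw [this]; linarith [hk]

private lemma card_ap (q : ℕ) (d : ℤ) (hd : 1 ≤ d) (a : ℤ) :
    ((Finset.range q).image (fun i : ℕ => a + (i : ℤ) * d)).card = q := by
  rw [Finset.card_image_of_injective _ ?_, Finset.card_range]
  intro i j hij
  simp only at hij
  have : (i : ℤ) * d = (j : ℤ) * d := by linarith
  have : (i : ℤ) = (j : ℤ) := mul_right_cancel₀ (by linarith) this
  exact_mod_cast this

private lemma pair_info (q : ℕ) (d a b x : ℤ) (hx : memP q d a x) (hy : memP q d b x) :
    d ∣ b - a ∧ b ≤ a + ((q:ℤ) - 1) * d := by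
  obtain ⟨hda, hla, hua⟩ := hx
  obtain ⟨hdb, hlb, hub⟩ := hy
  refine ⟨?_, by linarith⟩
  have : b - a = (x - a) - (x - b) := by ring
  rw [this]; exact dvd_sub hda hdb

private lemma no_middle (q : ℕ) (d aL aM aH vM : ℤ) (hd : 1 ≤ d)
    (hdL : d ∣ aM - aL) (hdH : d ∣ aH - aM)
    (hgap : aH ≤ aL + ((q:ℤ) - 1) * d)
    (h1 : aL ≤ aM) (h2 : aM ≤ aH)
    (hv : memP q d aM vM) (hnL : ¬ memP q d aL vM) (hnH : ¬ memP q d aH vM) : False := by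
  obtain ⟨hdv, hlv, huv⟩ := hv
  by_cases h : vM ≤ aL + ((q:ℤ) - 1) * d
  · apply hnL
    refine ⟨?_, by linarith, h⟩
    have : vM - aL = (vM - aM) + (aM - aL) := by ring
    rw [this]; exact dvd_add hdv hdL
  · apply hnH
    refine ⟨?_, by linarith, by linarith⟩
    have : vM - aH = (vM - aM) - (aH - aM) := by ring
    rw [this]; exact dvd_sub hdv hdH

/-- Let `q₁ > q₂ ≥ 3` and let `E₁, E₂, E₃` be three `q₁`-term arithmetic progressions
with the same common difference `d ≥ 1`, each intersecting a fixed set `E` in exactly one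
element, the three intersection elements being pairwise distinct. Then
`|E₁ ∪ E₂ ∪ E₃| ≥ 2q₁`. -/
theorem same_difference_cover_union (q₁ q₂ : ℕ) (hq₂ : 3 ≤ q₂) (h12 : q₂ < q₁)
    (d : ℤ) (hd : 1 ≤ d) (a₁ a₂ a₃ : ℤ) (E : Finset ℤ)
    (E₁ E₂ E₃ : Finset ℤ)
    (hE₁ : E₁ = (Finset.range q₁).image (fun i : ℕ => a₁ + (i : ℤ) * d))
    (hE₂ : E₂ = (Finset.range q₁).image (fun i : ℕ => a₂ + (i : ℤ) * d))
    (hE₃ : E₃ = (Finset.range q₁).image (fun i : ℕ => a₃ + (i : ℤ) * d))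
    (v₁ v₂ v₃ : ℤ) (h12' : v₁ < v₂) (h23 : v₂ < v₃)
    (hv₁ : E₁ ∩ E = {v₁}) (hv₂ : E₂ ∩ E = {v₂}) (hv₃ : E₃ ∩ E = {v₃}) :
    2 * q₁ ≤ (E₁ ∪ E₂ ∪ E₃).card := by
  have hq1 : 1 ≤ q₁ := by omega
  have hc₁ : E₁.card = q₁ := by rw [hE₁]; exact card_ap q₁ d hd a₁
  have hc₂ : E₂.card = q₁ := by rw [hE₂]; exact card_ap q₁ d hd a₂
  have hc₃ : E₃.card = q₁ := by rw [hE₃]; exact card_ap q₁ d hd a₃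
  -- v facts
  have hm₁ : v₁ ∈ E₁ ∩ E := by rw [hv₁]; exact Finset.mem_singleton_self v₁
  have hm₂ : v₂ ∈ E₂ ∩ E := by rw [hv₂]; exact Finset.mem_singleton_self v₂
  have hm₃ : v₃ ∈ E₃ ∩ E := by rw [hv₃]; exact Finset.mem_singleton_self v₃
  have hE1v : v₁ ∈ E₁ := (Finset.mem_inter.1 hm₁).1
  have hE2v : v₂ ∈ E₂ := (Finset.mem_inter.1 hm₂).1
  have hE3v : v₃ ∈ E₃ := (Finset.mem_inter.1 hm₃).1
  have hEv₁ : v₁ ∈ E := (Finset.mem_inter.1 hm₁).2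
  have hEv₂ : v₂ ∈ E := (Finset.mem_inter.1 hm₂).2
  have hEv₃ : v₃ ∈ E := (Finset.mem_inter.1 hm₃).2
  have notmem : ∀ (A : Finset ℤ) (w u : ℤ), A ∩ E = {w} → u ∈ E → u ≠ w → u ∉ A := by
    intro A w u hA hu hne hmem
    have : u ∈ A ∩ E := Finset.mem_inter.2 ⟨hmem, hu⟩
    rw [hA, Finset.mem_singleton] at this
    exact hne this
  have n12 : v₁ ∉ E₂ := notmem E₂ v₂ v₁ hv₂ hEv₁ (by linarith)
  have n13 : v₁ ∉ E₃ := notmem E₃ v₃ v₁ hv₃ hEv₁ (by linarith)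
  have n21 : v₂ ∉ E₁ := notmem E₁ v₁ v₂ hv₁ hEv₂ (by linarith)
  have n23 : v₂ ∉ E₃ := notmem E₃ v₃ v₂ hv₃ hEv₂ (by linarith)
  have n31 : v₃ ∉ E₁ := notmem E₁ v₁ v₃ hv₁ hEv₃ (by linarith)
  have n32 : v₃ ∉ E₂ := notmem E₂ v₂ v₃ hv₂ hEv₃ (by linarith)
  -- helper for disjoint case
  have disj_case : ∀ (A B : Finset ℤ), A ∩ B = ∅ → A.card = q₁ → B.card = q₁ →
      A ⊆ E₁ ∪ E₂ ∪ E₃ → B ⊆ E₁ ∪ E₂ ∪ E₃ → 2 * q₁ ≤ (E₁ ∪ E₂ ∪ E₃).card := by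
    intro A B hAB hA hB hAs hBs
    have hdisj : Disjoint A B := Finset.disjoint_iff_inter_eq_empty.2 hAB
    have h1 : (A ∪ B).card = 2 * q₁ := by
      rw [Finset.card_union_of_disjoint hdisj, hA, hB]; ring
    calc 2 * q₁ = (A ∪ B).card := h1.symm
      _ ≤ (E₁ ∪ E₂ ∪ E₃).card := Finset.card_le_card (Finset.union_subset hAs hBs)
  have s1 : E₁ ⊆ E₁ ∪ E₂ ∪ E₃ := by intro x hx; simp [hx]
  have s2 : E₂ ⊆ E₁ ∪ E₂ ∪ E₃ := by intro x hx; simp [hx]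
  have s3 : E₃ ⊆ E₁ ∪ E₂ ∪ E₃ := by intro x hx; simp [hx]
  by_cases c12 : E₁ ∩ E₂ = ∅
  · exact disj_case E₁ E₂ c12 hc₁ hc₂ s1 s2
  by_cases c13 : E₁ ∩ E₃ = ∅
  · exact disj_case E₁ E₃ c13 hc₁ hc₃ s1 s3
  by_cases c23 : E₂ ∩ E₃ = ∅
  · exact disj_case E₂ E₃ c23 hc₂ hc₃ s2 s3
  -- all pairwise intersecting: derive contradiction
  exfalso
  have miff : ∀ a x : ℤ, x ∈ (Finset.range q₁).image (fun i : ℕ => a + (i : ℤ) * d) ↔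
      memP q₁ d a x := fun a x => mem_ap_iff q₁ hq1 d hd a x
  obtain ⟨x12, hx12⟩ := Finset.nonempty_of_ne_empty c12
  obtain ⟨x13, hx13⟩ := Finset.nonempty_of_ne_empty c13
  obtain ⟨x23, hx23⟩ := Finset.nonempty_of_ne_empty c23
  rw [Finset.mem_inter, hE₁, hE₂, miff, miff] at hx12
  rw [Finset.mem_inter, hE₁, hE₃, miff, miff] at hx13
  rw [Finset.mem_inter, hE₂, hE₃, miff, miff] at hx23
  have i12 := pair_info q₁ d a₁ a₂ x12 hx12.1 hx12.2
  have i21 := pair_info q₁ d a₂ a₁ x12 hx12.2 hx12.1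
  have i13 := pair_info q₁ d a₁ a₃ x13 hx13.1 hx13.2
  have i31 := pair_info q₁ d a₃ a₁ x13 hx13.2 hx13.1
  have i23 := pair_info q₁ d a₂ a₃ x23 hx23.1 hx23.2
  have i32 := pair_info q₁ d a₃ a₂ x23 hx23.2 hx23.1
  have p1 : memP q₁ d a₁ v₁ := (miff a₁ v₁).1 (hE₁ ▸ hE1v)
  have p2 : memP q₁ d a₂ v₂ := (miff a₂ v₂).1 (hE₂ ▸ hE2v)
  have p3 : memP q₁ d a₃ v₃ := (miff a₃ v₃).1 (hE₃ ▸ hE3v)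
  have q12 : ¬ memP q₁ d a₂ v₁ := fun h => n12 (hE₂ ▸ (miff a₂ v₁).2 h)
  have q13 : ¬ memP q₁ d a₃ v₁ := fun h => n13 (hE₃ ▸ (miff a₃ v₁).2 h)
  have q21 : ¬ memP q₁ d a₁ v₂ := fun h => n21 (hE₁ ▸ (miff a₁ v₂).2 h)
  have q23 : ¬ memP q₁ d a₃ v₂ := fun h => n23 (hE₃ ▸ (miff a₃ v₂).2 h)
  have q31 : ¬ memP q₁ d a₁ v₃ := fun h => n31 (hE₁ ▸ (miff a₁ v₃).2 h)
  have q32 : ¬ memP q₁ d a₂ v₃ := fun h => n32 (hE₂ ▸ (miff a₂ v₃).2 h)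
  rcases le_total a₁ a₂ with h12a | h12a
  · rcases le_total a₂ a₃ with h23a | h23a
    · exact no_middle q₁ d a₁ a₂ a₃ v₂ hd i12.1 i23.1 i13.2 h12a h23a p2 q21 q23
    · rcases le_total a₁ a₃ with h13a | h13a
      · exact no_middle q₁ d a₁ a₃ a₂ v₃ hd i13.1 i32.1 i12.2 h13a h23a p3 q31 q32
      · exact no_middle q₁ d a₃ a₁ a₂ v₁ hd i31.1 i12.1 i32.2 h13a h12a p1 q13 q12
  · rcases le_total a₁ a₃ with h13a | h13a
    · exact no_middle q₁ d a₂ a₁ a₃ v₁ hd i21.1 i13.1 i23.2 h12a h13a p1 q12 q13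
    · rcases le_total a₂ a₃ with h23a | h23a
      · exact no_middle q₁ d a₂ a₃ a₁ v₃ hd i23.1 i31.1 i21.2 h23a h13a p3 q32 q31
      · exact no_middle q₁ d a₃ a₂ a₁ v₂ hd i32.1 i21.1 i31.2 h23a h12a p2 q23 q21
end

section
/- Let H be a hypergraph that is 3-edge-critical, i.e., H is not 2-colorable but every proper subhypergraph of H is 2-colorable. Then for every edge E of H and every vertex v ∈ E, there exists an edge E' of H with E ∩ E' = {v}. -/
/-- If a hypergraph `H` is 3-edge-critical (not 2-colorable, but removing any single edge
makes it 2-colorable), then for every edge `E` and every `v ∈ E` there is an edge `E'`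
with `E ∩ E' = {v}`. -/
theorem critical_hypergraph_cover {V : Type*} (H : Set (Set V))
    (hnc : ¬ ∃ c : V → Bool, ∀ E ∈ H, ∃ x ∈ E, ∃ y ∈ E, c x ≠ c y)
    (hcrit : ∀ E ∈ H, ∃ c : V → Bool, ∀ E' ∈ H \ {E}, ∃ x ∈ E', ∃ y ∈ E', c x ≠ c y) :
    ∀ E ∈ H, ∀ v ∈ E, ∃ E' ∈ H, E ∩ E' = {v} := by
  classical
  intro E hE v hv
  by_cases hEv : E = {v}
  · exact ⟨E, hE, by rw [hEv, Set.inter_self]⟩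
  obtain ⟨c, hc⟩ := hcrit E hE
  -- E is monochromatic under c
  have hmonoE : ∀ x ∈ E, ∀ y ∈ E, c x = c y := by
    by_contra h
    push_neg at h
    obtain ⟨x, hx, y, hy, hxy⟩ := h
    apply hnc
    refine ⟨c, fun F hF => ?_⟩
    by_cases hFE : F = E
    · exact hFE ▸ ⟨x, hx, y, hy, hxy⟩
    · exact hc F ⟨hF, hFE⟩
  -- flipped coloring
  set c' : V → Bool := fun x => if x = v then !(c v) else c x with hc'
  have hc'v : c' v = !(c v) := by simp [hc']
  have hc'ne : ∀ x, x ≠ v → c' x = c x := fun x hx => by simp [hc', hx]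
  -- some edge E' is monochromatic under c'
  push_neg at hnc
  obtain ⟨E', hE', hmono⟩ := hnc c'
  -- E' ≠ E : there is w ∈ E, w ≠ v
  have ⟨w, hw, hwv⟩ : ∃ w ∈ E, w ≠ v := by
    by_contra h
    push_neg at h
    exact hEv (Set.eq_singleton_iff_unique_mem.mpr ⟨hv, h⟩)
  have hne : E' ≠ E := by
    rintro rfl
    have h1 := hmono w hw v hv
    rw [hc'v, hc'ne w hwv, hmonoE w hw v hv] at h1
    simp at h1
  -- v ∈ E'
  obtain ⟨x, hx, y, hy, hxy⟩ := hc E' ⟨hE', hne⟩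
  have hvE' : v ∈ E' := by
    by_contra hvE'
    apply hxy
    have hx' := hc'ne x (fun h => hvE' (h ▸ hx))
    have hy' := hc'ne y (fun h => hvE' (h ▸ hy))
    rw [← hx', ← hy']
    exact hmono x hx y hy
  refine ⟨E', hE', Set.eq_singleton_iff_unique_mem.mpr ⟨⟨hv, hvE'⟩, ?_⟩⟩
  rintro u ⟨huE, huE'⟩
  by_contra huv
  have := hmono u huE' v hvE'
  rw [hc'v, hc'ne u huv, hmonoE u huE v hv] at this
  simp at this
end

section
/- Let H be a (q₁,q₂)-uniform hypergraph (every edge has cardinality q₁ or q₂, with q₁ > q₂) that is edge-critical for asymmetric 2-colorability: H is not asymmetrically 2-colorable, but every proper subhypergraph is. Then for every edge E and every vertex v ∈ E, there is an edge E' of the other cardinality with E ∩ E' = {v}. -/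
/-- A `(q₁,q₂)`-uniform hypergraph is asymmetrically 2-colorable if its vertices can be
colored red (`true`) / blue (`false`) with no long (size `q₁`) edge all red and no short
(size `q₂`) edge all blue. -/
def AsymColorable {V : Type*} (q₁ q₂ : ℕ) (H : Set (Finset V)) : Prop :=
  ∃ c : V → Bool, ∀ E ∈ H,
    (E.card = q₁ → ∃ v ∈ E, c v = false) ∧ (E.card = q₂ → ∃ v ∈ E, c v = true)

/-- If a `(q₁,q₂)`-uniform hypergraph (`q₁ > q₂`) is edge-critical for asymmetric
2-colorability, then every vertex of every edge is covered by an edge of the other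
cardinality meeting it exactly in that vertex. -/
theorem asym_critical_hypergraph_cover {V : Type*} [DecidableEq V]
    (q₁ q₂ : ℕ) (h12 : q₂ < q₁) (H : Set (Finset V))
    (huniform : ∀ E ∈ H, E.card = q₁ ∨ E.card = q₂)
    (hnc : ¬ AsymColorable q₁ q₂ H)
    (hcrit : ∀ E ∈ H, AsymColorable q₁ q₂ (H \ {E})) :
    ∀ E ∈ H, ∀ v ∈ E, ∃ E' ∈ H, E.card ≠ E'.card ∧ E ∩ E' = {v} := by
  intro E hE v hv
  obtain ⟨c, hc⟩ := hcrit E hE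
  have hcne : ∀ F ∈ H, F ≠ E →
      (F.card = q₁ → ∃ u ∈ F, c u = false) ∧ (F.card = q₂ → ∃ u ∈ F, c u = true) :=
    fun F hF hne => hc F ⟨hF, hne⟩
  have hne12 : q₁ ≠ q₂ := Nat.ne_of_gt h12
  rcases huniform E hE with hq1 | hq2
  · -- E long: all of E is true under c
    have hall : ∀ w ∈ E, c w = true := by
      by_contra h
      push_neg at h
      obtain ⟨w, hw, hcw⟩ := h
      apply hnc
      refine ⟨c, fun F hF => ?_⟩
      by_cases hFE : F = E
      · subst hFE
        exact ⟨fun _ => ⟨w, hw, by simpa using hcw⟩,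
          fun h2 => absurd (hq1.symm.trans h2) hne12⟩
      · exact hcne F hF hFE
    set c' : V → Bool := fun w => if w = v then false else c w with hc'def
    have hc'v : c' v = false := by simp [hc'def]
    have hc'ne : ∀ u, u ≠ v → c' u = c u := by intro u h; simp [hc'def, h]
    have hnotc' : ∃ F ∈ H, ¬((F.card = q₁ → ∃ u ∈ F, c' u = false) ∧
        (F.card = q₂ → ∃ u ∈ F, c' u = true)) := by
      by_contra h
      push_neg at h
      exact hnc ⟨c', h⟩
    obtain ⟨F, hF, hviol⟩ := hnotc'
    rcases huniform F hF with hF1 | hF2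
    · exfalso
      have hallF : ∀ u ∈ F, c' u = true := by
        by_contra h
        push_neg at h
        obtain ⟨u, hu, hcu⟩ := h
        exact hviol ⟨fun _ => ⟨u, hu, by simpa using hcu⟩,
          fun h2 => absurd (hF1.symm.trans h2) hne12⟩
      have hvF : v ∉ F := by
        intro hvF
        have := hallF v hvF
        rw [hc'v] at this
        exact absurd this (by simp)
      have hFE : F ≠ E := fun h => hvF (h ▸ hv)
      obtain ⟨u, hu, hcu⟩ := (hcne F hF hFE).1 hF1
      have hune : u ≠ v := fun h => hvF (h ▸ hu)
      have : c u = true := (hc'ne u hune) ▸ hallF u hu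
      rw [this] at hcu
      exact absurd hcu (by simp)
    · -- F short: this is the edge we want
      have hallF : ∀ u ∈ F, c' u = false := by
        by_contra h
        push_neg at h
        obtain ⟨u, hu, hcu⟩ := h
        exact hviol ⟨fun h1 => absurd (hF2.symm.trans h1) hne12.symm,
          fun _ => ⟨u, hu, by simpa using hcu⟩⟩
      have hFE : F ≠ E := by
        intro h
        rw [h, hq1] at hF2
        omega
      have hvF : v ∈ F := by
        by_contra hvF
        obtain ⟨u, hu, hcu⟩ := (hcne F hF hFE).2 hF2
        have hune : u ≠ v := fun h => hvF (h ▸ hu)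
        have : c u = false := (hc'ne u hune) ▸ hallF u hu
        rw [this] at hcu
        exact absurd hcu (by simp)
      refine ⟨F, hF, by rw [hq1, hF2]; omega, ?_⟩
      ext w
      simp only [Finset.mem_inter, Finset.mem_singleton]
      constructor
      · rintro ⟨hwE, hwF⟩
        by_contra hwv
        have h1 := hall w hwE
        have h2 := hallF w hwF
        rw [hc'ne w hwv, h1] at h2
        exact absurd h2 (by simp)
      · rintro rfl; exact ⟨hv, hvF⟩
  · -- E short: all of E is false under c
    have hall : ∀ w ∈ E, c w = false := by
      by_contra h
      push_neg at h
      obtain ⟨w, hw, hcw⟩ := h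
      apply hnc
      refine ⟨c, fun F hF => ?_⟩
      by_cases hFE : F = E
      · subst hFE
        exact ⟨fun h1 => absurd (hq2.symm.trans h1) hne12.symm,
          fun _ => ⟨w, hw, by simpa using hcw⟩⟩
      · exact hcne F hF hFE
    set c' : V → Bool := fun w => if w = v then true else c w with hc'def
    have hc'v : c' v = true := by simp [hc'def]
    have hc'ne : ∀ u, u ≠ v → c' u = c u := by intro u h; simp [hc'def, h]
    have hnotc' : ∃ F ∈ H, ¬((F.card = q₁ → ∃ u ∈ F, c' u = false) ∧
        (F.card = q₂ → ∃ u ∈ F, c' u = true)) := by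
      by_contra h
      push_neg at h
      exact hnc ⟨c', h⟩
    obtain ⟨F, hF, hviol⟩ := hnotc'
    rcases huniform F hF with hF1 | hF2
    · -- F long: this is the edge we want
      have hallF : ∀ u ∈ F, c' u = true := by
        by_contra h
        push_neg at h
        obtain ⟨u, hu, hcu⟩ := h
        exact hviol ⟨fun _ => ⟨u, hu, by simpa using hcu⟩,
          fun h2 => absurd (hF1.symm.trans h2) hne12⟩
      have hFE : F ≠ E := by
        intro h
        rw [h, hq2] at hF1
        omega
      have hvF : v ∈ F := by
        by_contra hvF
        obtain ⟨u, hu, hcu⟩ := (hcne F hF hFE).1 hF1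
        have hune : u ≠ v := fun h => hvF (h ▸ hu)
        have : c u = true := (hc'ne u hune) ▸ hallF u hu
        rw [this] at hcu
        exact absurd hcu (by simp)
      refine ⟨F, hF, by rw [hq2, hF1]; omega, ?_⟩
      ext w
      simp only [Finset.mem_inter, Finset.mem_singleton]
      constructor
      · rintro ⟨hwE, hwF⟩
        by_contra hwv
        have h1 := hall w hwE
        have h2 := hallF w hwF
        rw [hc'ne w hwv, h1] at h2
        exact absurd h2 (by simp)
      · rintro rfl; exact ⟨hv, hvF⟩
    · exfalso
      have hallF : ∀ u ∈ F, c' u = false := by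
        by_contra h
        push_neg at h
        obtain ⟨u, hu, hcu⟩ := h
        exact hviol ⟨fun h1 => absurd (hF2.symm.trans h1) hne12.symm,
          fun _ => ⟨u, hu, by simpa using hcu⟩⟩
      have hvF : v ∉ F := by
        intro hvF
        have := hallF v hvF
        rw [hc'v] at this
        exact absurd this (by simp)
      have hFE : F ≠ E := fun h => hvF (h ▸ hv)
      obtain ⟨u, hu, hcu⟩ := (hcne F hF hFE).2 hF2
      have hune : u ≠ v := fun h => hvF (h ▸ hu)
      have : c u = false := (hc'ne u hune) ▸ hallF u hu
      rw [this] at hcu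
      exact absurd hcu (by simp)
end

section
/- Up to translation and reflection, for any 3-term arithmetic progression {x₁,x₂,x₃}, there are at most a bounded (absolute constant) number of triples (x₄,x₅,x₆) of integers such that the six-element set {x₁,...,x₆} carries four 3-term arithmetic progressions forming the reduced Fano plane configuration (each of the four triples {x₁,x₂,x₃}, {x₁,x₄,x₅}, {x₂,x₅,x₆}, {x₃,x₄,x₆} is a 3-AP). Consequently, the number of copies of the reduced Fano plane among 3-APs in {1,...,n} is O(n²). -/
/-- A set of integers is a 3-term arithmetic progression. -/
def Is3AP (s : Set ℤ) : Prop := ∃ a d : ℤ, 1 ≤ d ∧ s = {a, a + d, a + 2 * d}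

lemma ap_rel {x y z : ℤ} (h : Is3AP {x, y, z}) :
    x + z = 2 * y ∨ x + y = 2 * z ∨ y + z = 2 * x := by
  obtain ⟨a, d, hd, hs⟩ := h
  have hx := Set.ext_iff.mp hs x
  have hy := Set.ext_iff.mp hs y
  have hz := Set.ext_iff.mp hs z
  have ha := Set.ext_iff.mp hs a
  have hb := Set.ext_iff.mp hs (a + d)
  have hc := Set.ext_iff.mp hs (a + 2 * d)
  simp only [Set.mem_insert_iff, Set.mem_singleton_iff, true_or, or_true, true_iff,
    iff_true] at hx hy hz ha hb hc
  omega

/-- Which element of the AP `{x,y,z}` is the average. -/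
def apCase (x y z : ℤ) : Fin 3 :=
  if x + z = 2 * y then 0 else if x + y = 2 * z then 1 else 2

lemma apCase_eq {x y z y' z' : ℤ} (h : Is3AP {x, y, z}) (h' : Is3AP {x, y', z'})
    (he : apCase x y z = apCase x y' z') :
    (x + z = 2 * y ∧ x + z' = 2 * y') ∨ (x + y = 2 * z ∧ x + y' = 2 * z') ∨
      (y + z = 2 * x ∧ y' + z' = 2 * x) := by
  have d1 := ap_rel h
  have d2 := ap_rel h'
  unfold apCase at he
  split_ifs at he <;> first | omega | exact absurd he (by decide)

/-- There is an absolute constant `C` such that: for any 3-AP `{x₁,x₂,x₃}` there are at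
most `C` triples `(x₄,x₅,x₆)` completing it to a reduced Fano plane configuration
(the four triples `{x₁,x₂,x₃}`, `{x₁,x₄,x₅}`, `{x₂,x₅,x₆}`, `{x₃,x₄,x₆}` all 3-APs);
consequently, the number of reduced Fano plane copies among 3-APs in `{1,…,n}` is
at most `C·n²`. -/
theorem reduced_fano_count :
    ∃ C : ℕ,
      (∀ x₁ x₂ x₃ : ℤ, Is3AP {x₁, x₂, x₃} →
        Set.ncard {t : ℤ × ℤ × ℤ | Is3AP {x₁, t.1, t.2.1} ∧ Is3AP {x₂, t.2.1, t.2.2} ∧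
          Is3AP {x₃, t.1, t.2.2}} ≤ C) ∧
      (∀ n : ℕ,
        Set.ncard {f : Fin 6 → ℤ | (∀ i, f i ∈ Set.Icc (1 : ℤ) (n : ℤ)) ∧
          Is3AP {f 0, f 1, f 2} ∧ Is3AP {f 0, f 3, f 4} ∧ Is3AP {f 1, f 4, f 5} ∧
          Is3AP {f 2, f 3, f 5}} ≤ C * n ^ 2) := by
  refine ⟨81, ?_, ?_⟩
  · intro x₁ x₂ x₃ _
    have hle : Set.ncard {t : ℤ × ℤ × ℤ | Is3AP {x₁, t.1, t.2.1} ∧ Is3AP {x₂, t.2.1, t.2.2} ∧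
          Is3AP {x₃, t.1, t.2.2}} ≤ (Set.univ : Set (Fin 3 × Fin 3 × Fin 3)).ncard := by
      apply Set.ncard_le_ncard_of_injOn
        (fun t => (apCase x₁ t.1 t.2.1, apCase x₂ t.2.1 t.2.2, apCase x₃ t.1 t.2.2))
      · intro t _; trivial
      · rintro ⟨a, b, c⟩ ht ⟨a', b', c'⟩ ht' hft
        simp only [Set.mem_setOf_eq] at ht ht'
        obtain ⟨h1, h2, h3⟩ := ht
        obtain ⟨h1', h2', h3'⟩ := ht'
        simp only [Prod.mk.injEq] at hft ⊢
        obtain ⟨hf1, hf2, hf3⟩ := hft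
        have e1 := apCase_eq h1 h1' hf1
        have e2 := apCase_eq h2 h2' hf2
        have e3 := apCase_eq h3 h3' hf3
        omega
    have h27 : (Set.univ : Set (Fin 3 × Fin 3 × Fin 3)).ncard = 27 := by
      simp [Set.ncard_univ, Nat.card_eq_fintype_card]
    omega
  · intro n
    classical
    have hle : Set.ncard {f : Fin 6 → ℤ | (∀ i, f i ∈ Set.Icc (1 : ℤ) (n : ℤ)) ∧
          Is3AP {f 0, f 1, f 2} ∧ Is3AP {f 0, f 3, f 4} ∧ Is3AP {f 1, f 4, f 5} ∧
          Is3AP {f 2, f 3, f 5}} ≤ Set.ncard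
          (↑(Finset.Icc (1:ℤ) (n:ℤ) ×ˢ Finset.Icc (1:ℤ) (n:ℤ) ×ˢ
            (Finset.univ : Finset (Fin 3 × Fin 3 × Fin 3 × Fin 3))) :
            Set (ℤ × ℤ × (Fin 3 × Fin 3 × Fin 3 × Fin 3))) := by
      apply Set.ncard_le_ncard_of_injOn
        (fun f => (f 0, f 1, apCase (f 0) (f 1) (f 2), apCase (f 0) (f 3) (f 4),
          apCase (f 1) (f 4) (f 5), apCase (f 2) (f 3) (f 5)))
      · intro f hf
        simp only [Set.mem_setOf_eq] at hf
        have h0 := hf.1 0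
        have h1 := hf.1 1
        simp only [Set.mem_Icc] at h0 h1
        simp only [Finset.coe_product, Finset.coe_univ, Set.mem_prod, Set.mem_univ,
          Finset.mem_coe, Finset.mem_Icc, and_true]
        exact ⟨h0, h1⟩
      · intro f hf g hg hfg
        simp only [Set.mem_setOf_eq] at hf hg
        obtain ⟨_, hA, hB, hC, hD⟩ := hf
        obtain ⟨_, hA', hB', hC', hD'⟩ := hg
        simp only [Prod.mk.injEq] at hfg
        obtain ⟨h0, h1, hc1, hc2, hc3, hc4⟩ := hfg
        rw [← h0] at hA' hB'
        rw [← h1] at hA' hC'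
        rw [← h0, ← h1] at hc1
        rw [← h0] at hc2
        rw [← h1] at hc3
        have e1 := apCase_eq hA hA' hc1
        have h2 : f 2 = g 2 := by omega
        rw [← h2] at hD' hc4
        have e2 := apCase_eq hB hB' hc2
        have e3 := apCase_eq hC hC' hc3
        have e4 := apCase_eq hD hD' hc4
        have h345 : f 3 = g 3 ∧ f 4 = g 4 ∧ f 5 = g 5 := by omega
        funext i
        fin_cases i
        · exact h0
        · exact h1
        · exact h2
        · exact h345.1
        · exact h345.2.1
        · exact h345.2.2
    rw [Set.ncard_coe_finset] at hle
    have hcard : (Finset.Icc (1:ℤ) (n:ℤ) ×ˢ Finset.Icc (1:ℤ) (n:ℤ) ×ˢ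
        (Finset.univ : Finset (Fin 3 × Fin 3 × Fin 3 × Fin 3))).card = n * (n * 81) := by
      rw [Finset.card_product, Finset.card_product, Int.card_Icc]
      simp
    rw [hcard] at hle
    calc _ ≤ n * (n * 81) := hle
      _ = 81 * n ^ 2 := by ring
end

section
/- Let q₁ > q₂ ≥ 3 and let E₁, E₂ be two q₁-term arithmetic progressions with distinct common differences, each intersecting a fixed q₂-element set E in exactly one (distinct) element. Then |E ∪ E₁ ∪ E₂| ≥ q₁ + ⌊q₁/2⌋ + q₂ - 2. -/
/-!
Two terms of `E₁` with consecutive indices differ by `d₁`, while any two elements of `E₂` differ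
by a multiple of `d₂`; after ordering `d₁ < d₂` these cannot agree, so `E₁ ∩ E₂` contains no two
consecutive terms of `E₁` and has at most `⌈q₁/2⌉` elements. Inclusion–exclusion, with `E` meeting
`E₁ ∪ E₂` in at most two points, then gives the bound.
-/

open Finset

lemma card_le_of_forall_add_one_notMem {s : Finset ℕ} {q : ℕ} (hs : s ⊆ range q)
    (hsucc : ∀ i ∈ s, i + 1 ∉ s) : #s ≤ (q + 1) / 2 := by
  calc #s ≤ #(range ((q + 1) / 2)) := by
        refine card_le_card_of_injOn (· / 2) (fun i hi => ?_) (fun i hi j hj hij => ?_)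
        · have := mem_range.1 (hs hi)
          simp only [coe_range, Set.mem_Iio]
          omega
        · by_contra hne
          rcases (by simp only at hij; omega : j = i + 1 ∨ i = j + 1) with rfl | rfl
          exacts [hsucc i hi hj, hsucc j hj hi]
    _ = (q + 1) / 2 := card_range _

def arithProg (a d : ℤ) (q : ℕ) : Finset ℤ :=
  (range q).image fun i : ℕ => a + i * d

lemma card_arithProg {d : ℤ} (hd : d ≠ 0) (a : ℤ) (q : ℕ) : #(arithProg a d q) = q := by
  rw [arithProg, card_image_of_injective _ fun i j h => by simpa [hd] using h, card_range]

lemma dvd_sub_of_mem_arithProg {a d x y : ℤ} {q : ℕ} (hx : x ∈ arithProg a d q)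
    (hy : y ∈ arithProg a d q) : d ∣ x - y := by
  obtain ⟨i, -, rfl⟩ := mem_image.1 hx
  obtain ⟨j, -, rfl⟩ := mem_image.1 hy
  exact ⟨i - j, by ring⟩

lemma card_arithProg_inter_le {S : Finset ℤ} {d e : ℤ} (hS : ∀ x ∈ S, ∀ y ∈ S, e ∣ x - y)
    (hed : ¬ e ∣ d) (a : ℤ) (q : ℕ) : #(arithProg a d q ∩ S) ≤ (q + 1) / 2 := by
  set I := (range q).filter fun i : ℕ => a + i * d ∈ S
  have hI : arithProg a d q ∩ S = I.image fun i : ℕ => a + i * d := by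
    ext x
    simp only [arithProg, I, mem_inter, mem_image, mem_filter]
    constructor
    · rintro ⟨⟨i, hi, rfl⟩, hS⟩
      exact ⟨i, ⟨hi, hS⟩, rfl⟩
    · rintro ⟨i, ⟨hi, hS⟩, rfl⟩
      exact ⟨⟨i, hi, rfl⟩, hS⟩
  calc #(arithProg a d q ∩ S) ≤ #I := hI ▸ card_image_le
    _ ≤ (q + 1) / 2 := by
      refine card_le_of_forall_add_one_notMem (filter_subset _ _) fun i hi hi' => hed ?_
      have := hS _ (mem_filter.1 hi').2 _ (mem_filter.1 hi).2
      rwa [Nat.cast_succ, add_mul, one_mul, ← add_assoc, add_sub_cancel_left] at this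

lemma card_arithProg_inter_arithProg_le {d e : ℤ} (hd : 0 < d) (hde : d < e) (a b : ℤ)
    (q r : ℕ) : #(arithProg a d q ∩ arithProg b e r) ≤ (q + 1) / 2 :=
  card_arithProg_inter_le (fun _ hx _ hy => dvd_sub_of_mem_arithProg hx hy)
    (fun h => (Int.le_of_dvd hd h).not_gt hde) a q

theorem distinct_difference_cover_union_general (q₁ q₂ : ℕ)
    (a₁ a₂ d₁ d₂ : ℤ) (hd₁ : 1 ≤ d₁) (hd₂ : 1 ≤ d₂) (hdd : d₁ ≠ d₂)
    (E : Finset ℤ) (hE : E.card = q₂)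
    (E₁ E₂ : Finset ℤ)
    (hE₁ : E₁ = (Finset.range q₁).image (fun i : ℕ => a₁ + (i : ℤ) * d₁))
    (hE₂ : E₂ = (Finset.range q₁).image (fun i : ℕ => a₂ + (i : ℤ) * d₂))
    (v₁ v₂ : ℤ)
    (hv₁ : E₁ ∩ E = {v₁}) (hv₂ : E₂ ∩ E = {v₂}) :
    q₁ + q₁ / 2 + q₂ - 2 ≤ (E ∪ E₁ ∪ E₂).card := by
  change E₁ = arithProg a₁ d₁ q₁ at hE₁
  change E₂ = arithProg a₂ d₂ q₁ at hE₂
  have hcard₁ : #E₁ = q₁ := hE₁ ▸ card_arithProg (by omega) a₁ q₁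
  have hcard₂ : #E₂ = q₁ := hE₂ ▸ card_arithProg (by omega) a₂ q₁
  have h₁₂ : #(E₁ ∩ E₂) ≤ (q₁ + 1) / 2 := by
    subst hE₁ hE₂
    rcases hdd.lt_or_gt with h | h
    · exact card_arithProg_inter_arithProg_le (by omega) h ..
    · exact inter_comm (arithProg a₁ d₁ q₁) _ ▸ card_arithProg_inter_arithProg_le (by omega) h ..
  have hE₁₂ : #(E ∩ (E₁ ∪ E₂)) ≤ 2 := by
    rw [inter_union_distrib_left, inter_comm E E₁, inter_comm E E₂, hv₁, hv₂]
    exact card_union_le _ _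
  have := card_union_add_card_inter E (E₁ ∪ E₂)
  have := card_union_add_card_inter E₁ E₂
  rw [union_assoc]
  omega

/-- Let `q₁ > q₂ ≥ 3` and let `E₁, E₂` be two `q₁`-term arithmetic progressions with
distinct common differences `d₁, d₂ ≥ 1`, each intersecting a fixed `q₂`-element set `E`
in exactly one element, these elements being distinct. Then
`|E ∪ E₁ ∪ E₂| ≥ q₁ + ⌊q₁/2⌋ + q₂ - 2`. -/
theorem distinct_difference_cover_union (q₁ q₂ : ℕ) (hq₂ : 3 ≤ q₂) (h12 : q₂ < q₁)
    (a₁ a₂ d₁ d₂ : ℤ) (hd₁ : 1 ≤ d₁) (hd₂ : 1 ≤ d₂) (hdd : d₁ ≠ d₂)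
    (E : Finset ℤ) (hE : E.card = q₂)
    (E₁ E₂ : Finset ℤ)
    (hE₁ : E₁ = (Finset.range q₁).image (fun i : ℕ => a₁ + (i : ℤ) * d₁))
    (hE₂ : E₂ = (Finset.range q₁).image (fun i : ℕ => a₂ + (i : ℤ) * d₂))
    (v₁ v₂ : ℤ) (hv : v₁ ≠ v₂)
    (hv₁ : E₁ ∩ E = {v₁}) (hv₂ : E₂ ∩ E = {v₂}) :
    q₁ + q₁ / 2 + q₂ - 2 ≤ (E ∪ E₁ ∪ E₂).card :=
  distinct_difference_cover_union_general q₁ q₂ a₁ a₂ d₁ d₂ hd₁ hd₂ hdd E hE E₁ E₂ hE₁ hE₂ v₁ v₂ hv₁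
    hv₂
end

section
/- Let E₁, E₂, E₃ be q₁-term arithmetic progressions with common differences (d, 2d, 4d) respectively for some d ≥ 1, each intersecting a fixed set E in exactly one element. Then |E₁ ∪ E₂ ∪ E₃| ≥ q₁ + ⌊q₁/2⌋ + 2⌊q₁/4⌋ ≥ 2q₁ - 2, provided E₂ contains no element congruent to 1 or 3 mod 4 relative to the residue class of E₃; otherwise |E₂ ∪ E₃| = 2q₁. -/
open Finset

private lemma ap_inj (a e : ℤ) (he : e ≠ 0) :
    Function.Injective (fun i : ℕ => a + (i : ℤ) * e) := by
  intro i j h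
  simp only [add_right_inj] at h
  exact_mod_cast mul_right_cancel₀ he h

private lemma count_lb (n k r : ℕ) (hr : r < k) (P : ℕ → Prop) [DecidablePred P]
    (h : ∀ i, i % k = r → P i) :
    n / k ≤ ((Finset.range n).filter P).card := by
  have hinj : Function.Injective (fun j : ℕ => k * j + r) := by
    intro a b hab
    simp only [Nat.add_right_cancel_iff] at hab
    exact Nat.eq_of_mul_eq_mul_left (by omega) hab
  have hsub : (Finset.range (n / k)).image (fun j => k * j + r)
      ⊆ (Finset.range n).filter P := by
    intro x hx
    simp only [Finset.mem_image, Finset.mem_range] at hx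
    obtain ⟨j, hj, rfl⟩ := hx
    simp only [Finset.mem_filter, Finset.mem_range]
    have h1 : k * (j + 1) ≤ k * (n / k) := Nat.mul_le_mul_left k (by omega)
    have h2 : n / k * k ≤ n := Nat.div_mul_le_self n k
    rw [Nat.mul_add, Nat.mul_one] at h1
    rw [Nat.mul_comm] at h2
    refine ⟨by omega, h _ ?_⟩
    rw [Nat.mul_add_mod]
    exact Nat.mod_eq_of_lt hr
  calc n / k = ((Finset.range (n / k)).image (fun j => k * j + r)).card := by
        rw [Finset.card_image_of_injective _ hinj, Finset.card_range]
    _ ≤ _ := Finset.card_le_card hsub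

private lemma ap_filter_card (q : ℕ) (a e : ℤ) (he : e ≠ 0) (p : ℤ → Prop)
    [DecidablePred p] :
    (((Finset.range q).image (fun i : ℕ => a + (i : ℤ) * e)).filter p).card
      = ((Finset.range q).filter (fun i : ℕ => p (a + (i : ℤ) * e))).card := by
  rw [Finset.filter_image, Finset.card_image_of_injective _ (ap_inj a e he)]

/-- Let `E₁, E₂, E₃` be `q₁`-term arithmetic progressions (`q₁ ≥ 6`) with common
differences `d, 2d, 4d` (`d ≥ 1`), each intersecting a fixed set `E` in exactly one
element. If no element of `E₂` is congruent to `d` or `3d` mod `4d` relative to the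
residue class of `E₃`, then `|E₁ ∪ E₂ ∪ E₃| ≥ q₁ + ⌊q₁/2⌋ + 2⌊q₁/4⌋ ≥ 2q₁ - 2`;
otherwise `|E₂ ∪ E₃| = 2q₁`. -/
theorem diff_d_2d_4d_union (q₁ : ℕ) (hq₁ : 6 ≤ q₁) (d : ℤ) (hd : 1 ≤ d)
    (a₁ a₂ a₃ : ℤ) (E : Finset ℤ)
    (E₁ E₂ E₃ : Finset ℤ)
    (hE₁ : E₁ = (Finset.range q₁).image (fun i : ℕ => a₁ + (i : ℤ) * d))
    (hE₂ : E₂ = (Finset.range q₁).image (fun i : ℕ => a₂ + (i : ℤ) * (2 * d)))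
    (hE₃ : E₃ = (Finset.range q₁).image (fun i : ℕ => a₃ + (i : ℤ) * (4 * d)))
    (h₁ : (E₁ ∩ E).card = 1) (h₂ : (E₂ ∩ E).card = 1) (h₃ : (E₃ ∩ E).card = 1) :
    ((¬ ∃ x ∈ E₂, (x - a₃) % (4 * d) = d ∨ (x - a₃) % (4 * d) = 3 * d) →
      (q₁ + q₁ / 2 + 2 * (q₁ / 4) ≤ (E₁ ∪ E₂ ∪ E₃).card ∧
        2 * q₁ - 2 ≤ q₁ + q₁ / 2 + 2 * (q₁ / 4))) ∧
    ((∃ x ∈ E₂, (x - a₃) % (4 * d) = d ∨ (x - a₃) % (4 * d) = 3 * d) →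
      (E₂ ∪ E₃).card = 2 * q₁) := by
  have hd0 : (0 : ℤ) < d := by omega
  have hdne : d ≠ 0 := by omega
  have h2dne : (2 : ℤ) * d ≠ 0 := by omega
  have h4dne : (4 : ℤ) * d ≠ 0 := by omega
  have hcard₁ : E₁.card = q₁ := by
    rw [hE₁, Finset.card_image_of_injective _ (ap_inj a₁ d hdne), Finset.card_range]
  have hcard₂ : E₂.card = q₁ := by
    rw [hE₂, Finset.card_image_of_injective _ (ap_inj a₂ _ h2dne), Finset.card_range]
  have hcard₃ : E₃.card = q₁ := by
    rw [hE₃, Finset.card_image_of_injective _ (ap_inj a₃ _ h4dne), Finset.card_range]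
  have hmem₁ : ∀ x ∈ E₁, ∃ i : ℕ, i < q₁ ∧ x = a₁ + (i : ℤ) * d := by
    intro x hx; rw [hE₁] at hx
    simp only [Finset.mem_image, Finset.mem_range] at hx
    obtain ⟨i, hi, rfl⟩ := hx; exact ⟨i, hi, rfl⟩
  have hmem₂ : ∀ x ∈ E₂, ∃ i : ℕ, i < q₁ ∧ x = a₂ + (i : ℤ) * (2 * d) := by
    intro x hx; rw [hE₂] at hx
    simp only [Finset.mem_image, Finset.mem_range] at hx
    obtain ⟨i, hi, rfl⟩ := hx; exact ⟨i, hi, rfl⟩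
  have hmem₃ : ∀ x ∈ E₃, ∃ i : ℕ, i < q₁ ∧ x = a₃ + (i : ℤ) * (4 * d) := by
    intro x hx; rw [hE₃] at hx
    simp only [Finset.mem_image, Finset.mem_range] at hx
    obtain ⟨i, hi, rfl⟩ := hx; exact ⟨i, hi, rfl⟩
  have hres₃ : ∀ x ∈ E₃, (x - a₃) % (4 * d) = 0 := by
    intro x hx
    obtain ⟨i, _, rfl⟩ := hmem₃ x hx
    have : a₃ + (i : ℤ) * (4 * d) - a₃ = (4 * d) * i := by ring
    rw [this, Int.mul_emod_right]
  -- the set B : elements of E₂ not in the residue class of E₃ mod 4d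
  have hB : q₁ / 2 ≤ (E₂.filter (fun x => ¬ (x - a₃) % (4 * d) = 0)).card := by
    rw [hE₂, ap_filter_card q₁ a₂ _ h2dne]
    obtain ⟨r, hr, hP⟩ : ∃ r < 2, ∀ i : ℕ, i % 2 = r →
        ¬ (a₂ + (i : ℤ) * (2 * d) - a₃) % (4 * d) = 0 := by
      by_cases hdvd : d ∣ a₂ - a₃
      · obtain ⟨m, hm⟩ := hdvd
        have key : ∀ i : ℕ, (a₂ + (i : ℤ) * (2 * d) - a₃) % (4 * d)
            = d * ((m + 2 * i) % 4) := by
          intro i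
          have h1 : a₂ + (i : ℤ) * (2 * d) - a₃ = d * (m + 2 * i) := by
            linear_combination hm
          rw [h1, show (4 : ℤ) * d = d * 4 by ring,
            Int.mul_emod_mul_of_pos _ _ hd0]
        refine ⟨if m % 4 = 0 then 1 else 0, by split_ifs <;> omega, ?_⟩
        intro i hi hcon
        rw [key i] at hcon
        have h4 : (m + 2 * i) % 4 = 0 := by
          rcases mul_eq_zero.mp hcon with h | h
          · exact absurd h hdne
          · exact h
        split_ifs at hi with hm4 <;> omega
      · refine ⟨0, by omega, ?_⟩
        intro i _ hcon
        apply hdvd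
        have h4 : (4 * d) ∣ (a₂ + (i : ℤ) * (2 * d) - a₃) :=
          Int.dvd_of_emod_eq_zero hcon
        have hdd : d ∣ (a₂ + (i : ℤ) * (2 * d) - a₃) :=
          dvd_trans ⟨4, by ring⟩ h4
        have heq : a₂ - a₃ = (a₂ + (i : ℤ) * (2 * d) - a₃) - (i : ℤ) * (2 * d) := by
          ring
        rw [heq]
        exact dvd_sub hdd ⟨2 * i, by ring⟩
    exact count_lb q₁ 2 r hr _ hP
  constructor
  · intro h
    refine ⟨?_, by omega⟩
    by_cases hc1 : d ∣ a₁ - a₃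
    · -- E₁ in the same class mod d as E₃
      obtain ⟨m, hm⟩ := hc1
      set B := E₂.filter (fun x => ¬ (x - a₃) % (4 * d) = 0) with hBdef
      set C := E₁.filter (fun x =>
        (x - a₃) % (4 * d) = d ∨ (x - a₃) % (4 * d) = 3 * d) with hCdef
      have key : ∀ i : ℕ, (a₁ + (i : ℤ) * d - a₃) % (4 * d) = d * ((m + i) % 4) := by
        intro i
        have h1 : a₁ + (i : ℤ) * d - a₃ = d * (m + i) := by linear_combination hm
        rw [h1, show (4 : ℤ) * d = d * 4 by ring, Int.mul_emod_mul_of_pos _ _ hd0]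
      have hC : 2 * (q₁ / 4) ≤ C.card := by
        rw [hCdef, hE₁, ap_filter_card q₁ a₁ d hdne, Finset.filter_or]
        rw [Finset.card_union_of_disjoint]
        · have hc1' : q₁ / 4 ≤ ((Finset.range q₁).filter
              (fun i : ℕ => (a₁ + (i : ℤ) * d - a₃) % (4 * d) = d)).card := by
            refine count_lb q₁ 4 ((1 - m) % 4).toNat (by omega) _ ?_
            intro i hi
            rw [key i]
            have hmi : (m + i) % 4 = 1 := by omega
            rw [hmi, mul_one]
          have hc3' : q₁ / 4 ≤ ((Finset.range q₁).filter
              (fun i : ℕ => (a₁ + (i : ℤ) * d - a₃) % (4 * d) = 3 * d)).card := by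
            refine count_lb q₁ 4 ((3 - m) % 4).toNat (by omega) _ ?_
            intro i hi
            rw [key i]
            have hmi : (m + i) % 4 = 3 := by omega
            rw [hmi]; ring
          omega
        · rw [Finset.disjoint_left]
          intro i hi hi'
          simp only [Finset.mem_filter] at hi hi'
          have := hi.2.symm.trans hi'.2
          omega
      have hd₃B : Disjoint E₃ B := by
        rw [Finset.disjoint_left]
        intro x hx hx'
        rw [hBdef, Finset.mem_filter] at hx'
        exact hx'.2 (hres₃ x hx)
      have hd₃C : Disjoint E₃ C := by
        rw [Finset.disjoint_left]
        intro x hx hx'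
        rw [hCdef, Finset.mem_filter] at hx'
        have := hres₃ x hx
        rcases hx'.2 with h' | h' <;> omega
      have hdBC : Disjoint B C := by
        rw [Finset.disjoint_left]
        intro x hx hx'
        rw [hBdef, Finset.mem_filter] at hx
        rw [hCdef, Finset.mem_filter] at hx'
        exact h ⟨x, hx.1, hx'.2⟩
      have hsub : E₃ ∪ B ∪ C ⊆ E₁ ∪ E₂ ∪ E₃ := by
        refine Finset.union_subset (Finset.union_subset ?_ ?_) ?_
        · exact Finset.subset_union_right
        · exact (Finset.filter_subset _ _).trans
            ((Finset.subset_union_right).trans Finset.subset_union_left)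
        · exact (Finset.filter_subset _ _).trans
            (Finset.subset_union_left.trans Finset.subset_union_left)
      have hle := Finset.card_le_card hsub
      rw [Finset.card_union_of_disjoint, Finset.card_union_of_disjoint hd₃B] at hle
      · omega
      · exact Finset.disjoint_union_left.mpr ⟨hd₃C, hdBC⟩
    · -- E₁ disjoint from E₃
      have hd₁₃ : Disjoint E₁ E₃ := by
        rw [Finset.disjoint_left]
        intro x hx hx'
        obtain ⟨i, _, rfl⟩ := hmem₁ x hx
        obtain ⟨j, _, hj⟩ := hmem₃ _ hx'
        exact hc1 ⟨(j : ℤ) * 4 - i, by linear_combination hj⟩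
      by_cases hc2 : d ∣ a₁ - a₂
      · -- use E₂ ⊔ E₃ ⊔ C'
        obtain ⟨m, hm⟩ := hc2
        set C' := E₁.filter (fun x => (x - a₂) % (2 * d) = d) with hCdef
        have key : ∀ i : ℕ, (a₁ + (i : ℤ) * d - a₂) % (2 * d)
            = d * ((m + i) % 2) := by
          intro i
          have h1 : a₁ + (i : ℤ) * d - a₂ = d * (m + i) := by linear_combination hm
          rw [h1, show (2 : ℤ) * d = d * 2 by ring, Int.mul_emod_mul_of_pos _ _ hd0]
        have hC' : q₁ / 2 ≤ C'.card := by
          rw [hCdef, hE₁, ap_filter_card q₁ a₁ d hdne]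
          refine count_lb q₁ 2 ((1 - m) % 2).toNat (by omega) _ ?_
          intro i hi
          rw [key i]
          have hmi : (m + i) % 2 = 1 := by omega
          rw [hmi, mul_one]
        have hd₂₃ : Disjoint E₂ E₃ := by
          rw [Finset.disjoint_left]
          intro x hx hx'
          obtain ⟨i, _, rfl⟩ := hmem₂ x hx
          obtain ⟨j, _, hj⟩ := hmem₃ _ hx'
          exact hc1 ⟨m + (j : ℤ) * 4 - i * 2, by linear_combination hm + hj⟩
        have hd₂C : Disjoint E₂ C' := by
          rw [Finset.disjoint_left]
          intro x hx hx'
          rw [hCdef, Finset.mem_filter] at hx'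
          obtain ⟨i, _, rfl⟩ := hmem₂ x hx
          have : (a₂ + (i : ℤ) * (2 * d) - a₂) % (2 * d) = 0 := by
            have he : a₂ + (i : ℤ) * (2 * d) - a₂ = (2 * d) * i := by ring
            rw [he, Int.mul_emod_right]
          omega
        have hd₃C : Disjoint E₃ C' := by
          rw [Finset.disjoint_left]
          intro x hx hx'
          rw [hCdef, Finset.mem_filter] at hx'
          exact (Finset.disjoint_left.mp hd₁₃) hx'.1 hx
        have hsub : E₂ ∪ E₃ ∪ C' ⊆ E₁ ∪ E₂ ∪ E₃ := by
          refine Finset.union_subset (Finset.union_subset ?_ ?_) ?_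
          · exact (Finset.subset_union_right).trans Finset.subset_union_left
          · exact Finset.subset_union_right
          · exact (Finset.filter_subset _ _).trans
              (Finset.subset_union_left.trans Finset.subset_union_left)
        have hle := Finset.card_le_card hsub
        rw [Finset.card_union_of_disjoint, Finset.card_union_of_disjoint hd₂₃] at hle
        · omega
        · exact Finset.disjoint_union_left.mpr ⟨hd₂C, hd₃C⟩
      · -- E₁ disjoint from both E₂ and E₃ : use E₁ ⊔ E₃ ⊔ B
        set B := E₂.filter (fun x => ¬ (x - a₃) % (4 * d) = 0) with hBdef
        have hd₁₂ : Disjoint E₁ E₂ := by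
          rw [Finset.disjoint_left]
          intro x hx hx'
          obtain ⟨i, _, rfl⟩ := hmem₁ x hx
          obtain ⟨j, _, hj⟩ := hmem₂ _ hx'
          exact hc2 ⟨(j : ℤ) * 2 - i, by linear_combination hj⟩
        have hd₁B : Disjoint E₁ B := by
          exact hd₁₂.mono_right (Finset.filter_subset _ _)
        have hd₃B : Disjoint E₃ B := by
          rw [Finset.disjoint_left]
          intro x hx hx'
          rw [hBdef, Finset.mem_filter] at hx'
          exact hx'.2 (hres₃ x hx)
        have hsub : E₁ ∪ E₃ ∪ B ⊆ E₁ ∪ E₂ ∪ E₃ := by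
          refine Finset.union_subset (Finset.union_subset ?_ ?_) ?_
          · exact Finset.subset_union_left.trans Finset.subset_union_left
          · exact Finset.subset_union_right
          · exact (Finset.filter_subset _ _).trans
              ((Finset.subset_union_right).trans Finset.subset_union_left)
        have hle := Finset.card_le_card hsub
        rw [Finset.card_union_of_disjoint, Finset.card_union_of_disjoint hd₁₃] at hle
        · omega
        · exact Finset.disjoint_union_left.mpr ⟨hd₁B, hd₃B⟩
  · rintro ⟨x, hx, hres⟩
    have hkey : (2 * d) ∣ (x - a₃ - d) := by
      rcases hres with h' | h'
      · have : (4 * d) ∣ (x - a₃ - d) := by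
          have hd4 : d % (4 * d) = d := Int.emod_eq_of_lt (by omega) (by omega)
          refine Int.dvd_of_emod_eq_zero ?_
          rw [← Int.emod_eq_emod_iff_emod_sub_eq_zero] at *
          rw [h', hd4]
        exact dvd_trans ⟨2, by ring⟩ this
      · have h3 : (4 * d) ∣ (x - a₃ - 3 * d) := by
          have hd4 : (3 * d) % (4 * d) = 3 * d := Int.emod_eq_of_lt (by omega) (by omega)
          refine Int.dvd_of_emod_eq_zero ?_
          rw [← Int.emod_eq_emod_iff_emod_sub_eq_zero] at *
          rw [h', hd4]
        have h2 : (2 * d) ∣ (x - a₃ - 3 * d) := dvd_trans ⟨2, by ring⟩ h3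
        have he : x - a₃ - d = (x - a₃ - 3 * d) + 2 * d := by ring
        rw [he]
        exact dvd_add h2 dvd_rfl
    obtain ⟨i₀, _, rfl⟩ := hmem₂ x hx
    have hd₂₃ : Disjoint E₂ E₃ := by
      rw [Finset.disjoint_left]
      intro y hy hy'
      obtain ⟨j, _, rfl⟩ := hmem₂ y hy
      obtain ⟨k, _, hk⟩ := hmem₃ _ hy'
      -- a₂ + j*(2d) = a₃ + k*(4d), and 2d ∣ a₂ + i₀*(2d) - a₃ - d
      have hdd : (2 * d) ∣ (d : ℤ) := by
        have h1 : a₂ - a₃ = (k : ℤ) * (4 * d) - j * (2 * d) := by linear_combination hk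
        obtain ⟨c, hc⟩ := hkey
        exact ⟨(k : ℤ) * 2 - j + i₀ - c, by linear_combination h1 - hc⟩
      have := Int.le_of_dvd hd0 hdd
      omega
    rw [Finset.card_union_of_disjoint hd₂₃, hcard₂, hcard₃]
    omega
end
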